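/- Let ρ > 1 and κ = √(ρ² - 1) > 0. Then ∫₀^∞ (ρ² + κ²t²)^{-3/2} · artanh(1/√(ρ² + κ²t²)) dt = (π/2)·(1/(ρκ) - 1/ρ²). -/

import Mathlib

open Real MeasureTheory Filter Topology

/-- The inverse hyperbolic tangent. -/
noncomputable def artanh (x : ℝ) : ℝ := (1 / 2) * Real.log ((1 + x) / (1 - x))

lemma artanh_nonneg {x : ℝ} (h0 : 0 ≤ x) (h1 : x < 1) : 0 ≤ _root_.artanh x := by
  have hd : (0:ℝ) < 1 - x := by linarith
  have : (1:ℝ) ≤ (1 + x) / (1 - x) := (one_le_div hd).2 (by linarith)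
  have := Real.log_nonneg this
  rw [_root_.artanh]; positivity

lemma artanh_zero : _root_.artanh 0 = 0 := by simp [_root_.artanh]

lemma continuousAt_artanh_zero : ContinuousAt _root_.artanh 0 := by
  have h : ContinuousAt (fun x : ℝ => (1 / 2 : ℝ) * Real.log ((1 + x) / (1 - x))) 0 :=
    continuousAt_const.mul
      (((continuousAt_const.add continuousAt_id).div
        (continuousAt_const.sub continuousAt_id) (by norm_num)).log (by norm_num))
  exact h

section aux

variable {ρ κ : ℝ}

lemma deriv_v (hρ : 1 < ρ) (hκ2 : κ ^ 2 = ρ ^ 2 - 1) (hκ : 0 < κ) (t : ℝ) :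
    HasDerivAt (fun u : ℝ => u / (ρ ^ 2 * Real.sqrt (ρ ^ 2 + κ ^ 2 * u ^ 2)))
      (1 / Real.sqrt (ρ ^ 2 + κ ^ 2 * t ^ 2) ^ 3) t := by
  have hρ0 : (0:ℝ) < ρ := lt_trans one_pos hρ
  have hspos : (0:ℝ) < ρ ^ 2 + κ ^ 2 * t ^ 2 := by nlinarith [sq_nonneg (κ * t)]
  have hr0 : 0 < Real.sqrt (ρ ^ 2 + κ ^ 2 * t ^ 2) := Real.sqrt_pos.2 hspos
  set r := Real.sqrt (ρ ^ 2 + κ ^ 2 * t ^ 2) with hrdef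
  have hr2 : r ^ 2 = ρ ^ 2 + κ ^ 2 * t ^ 2 := Real.sq_sqrt hspos.le
  have hds : HasDerivAt (fun u : ℝ => ρ ^ 2 + κ ^ 2 * u ^ 2) (κ ^ 2 * (2 * t)) t := by
    simpa using ((hasDerivAt_pow 2 t).const_mul (κ ^ 2)).const_add (ρ ^ 2)
  have hdr : HasDerivAt (fun u : ℝ => Real.sqrt (ρ ^ 2 + κ ^ 2 * u ^ 2))
      (κ ^ 2 * (2 * t) / (2 * r)) t := hds.sqrt (by positivity)
  have hdd : HasDerivAt (fun u : ℝ => ρ ^ 2 * Real.sqrt (ρ ^ 2 + κ ^ 2 * u ^ 2))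
      (ρ ^ 2 * (κ ^ 2 * (2 * t) / (2 * r))) t := hdr.const_mul _
  have h := (hasDerivAt_id t).div hdd (by positivity)
  rw [← hrdef] at h
  clear_value r
  refine h.congr_deriv ?_
  symm
  simp only [id_eq]
  field_simp
  linear_combination (-1 : ℝ) * hr2

lemma deriv_artanh (hρ : 1 < ρ) (hκ2 : κ ^ 2 = ρ ^ 2 - 1) (hκ : 0 < κ) (t : ℝ) :
    HasDerivAt (fun u : ℝ => _root_.artanh (1 / Real.sqrt (ρ ^ 2 + κ ^ 2 * u ^ 2)))
      (-(t / ((1 + t ^ 2) * Real.sqrt (ρ ^ 2 + κ ^ 2 * t ^ 2)))) t := by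
  have hρ0 : (0:ℝ) < ρ := lt_trans one_pos hρ
  have hspos : (0:ℝ) < ρ ^ 2 + κ ^ 2 * t ^ 2 := by nlinarith [sq_nonneg (κ * t)]
  have hs1 : (1:ℝ) < ρ ^ 2 + κ ^ 2 * t ^ 2 := by nlinarith [sq_nonneg (κ * t)]
  set r := Real.sqrt (ρ ^ 2 + κ ^ 2 * t ^ 2) with hrdef
  have hr1 : 1 < r := by
    rw [hrdef, show (1:ℝ) = Real.sqrt 1 by simp]
    exact Real.sqrt_lt_sqrt one_pos.le hs1
  have hr0 : (0:ℝ) < r := lt_trans one_pos hr1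
  have hr2 : r ^ 2 = ρ ^ 2 + κ ^ 2 * t ^ 2 := Real.sq_sqrt hspos.le
  have hds : HasDerivAt (fun u : ℝ => ρ ^ 2 + κ ^ 2 * u ^ 2) (κ ^ 2 * (2 * t)) t := by
    simpa using ((hasDerivAt_pow 2 t).const_mul (κ ^ 2)).const_add (ρ ^ 2)
  have hdr : HasDerivAt (fun u : ℝ => Real.sqrt (ρ ^ 2 + κ ^ 2 * u ^ 2))
      (κ ^ 2 * (2 * t) / (2 * r)) t := hds.sqrt (by positivity)
  have hdg : HasDerivAt (fun u : ℝ => 1 / Real.sqrt (ρ ^ 2 + κ ^ 2 * u ^ 2))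
      ((0 * r - 1 * (κ ^ 2 * (2 * t) / (2 * r))) / r ^ 2) t :=
    (hasDerivAt_const t 1).div hdr hr0.ne'
  set g' := (0 * r - 1 * (κ ^ 2 * (2 * t) / (2 * r))) / r ^ 2 with hg'
  have hgt : (1:ℝ) / r < 1 := by
    rw [div_lt_one hr0]; exact hr1
  have hgt0 : (0:ℝ) < 1 / r := by positivity
  have h1g : (0:ℝ) < 1 - 1 / r := by linarith
  have h1g' : (0:ℝ) < 1 + 1 / r := by linarith
  have hnum : HasDerivAt (fun u : ℝ => 1 + 1 / Real.sqrt (ρ ^ 2 + κ ^ 2 * u ^ 2)) g' t :=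
    hdg.const_add 1
  have hden : HasDerivAt (fun u : ℝ => 1 - 1 / Real.sqrt (ρ ^ 2 + κ ^ 2 * u ^ 2)) (-g') t :=
    hdg.const_sub 1
  have hq : HasDerivAt (fun u : ℝ =>
      (1 + 1 / Real.sqrt (ρ ^ 2 + κ ^ 2 * u ^ 2)) / (1 - 1 / Real.sqrt (ρ ^ 2 + κ ^ 2 * u ^ 2)))
      ((g' * (1 - 1 / r) - (1 + 1 / r) * (-g')) / (1 - 1 / r) ^ 2) t :=
    hnum.div hden h1g.ne'
  have hqpos : (0:ℝ) < (1 + 1 / r) / (1 - 1 / r) := by positivity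
  have hlog := hq.log hqpos.ne'
  have h := hlog.const_mul (1 / 2 : ℝ)
  have heq : (fun u : ℝ => (1 / 2 : ℝ) * Real.log
      ((1 + 1 / Real.sqrt (ρ ^ 2 + κ ^ 2 * u ^ 2)) / (1 - 1 / Real.sqrt (ρ ^ 2 + κ ^ 2 * u ^ 2))))
      = fun u : ℝ => _root_.artanh (1 / Real.sqrt (ρ ^ 2 + κ ^ 2 * u ^ 2)) := by
    funext u; rw [_root_.artanh]
  rw [heq] at h
  rw [← hrdef] at h
  clear_value r
  refine h.congr_deriv ?_
  symm
  have hAne : (1 : ℝ) - 1 / r ≠ 0 := h1g.ne'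
  have hBne : (1 : ℝ) + 1 / r ≠ 0 := h1g'.ne'
  have hrne : r ≠ 0 := hr0.ne'
  have hr1ne : r - 1 ≠ 0 := by nlinarith
  have hr1ne' : r + 1 ≠ 0 := by nlinarith
  have h1t : (1 : ℝ) + t ^ 2 ≠ 0 := by positivity
  have hsq1 : r ^ 2 - 1 ≠ 0 := by nlinarith
  have hcube : r ^ 3 - r ≠ 0 := by
    intro h
    apply hsq1
    have h2 : r * (r ^ 2 - 1) = 0 := by linear_combination h
    rcases mul_eq_zero.1 h2 with h' | h'
    · exact absurd h' hrne
    · exact h'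
  rw [hg']
  have key : ((0 * r - 1 * (κ ^ 2 * (2 * t) / (2 * r))) / r ^ 2 * (1 - 1 / r) -
            (1 + 1 / r) * -((0 * r - 1 * (κ ^ 2 * (2 * t) / (2 * r))) / r ^ 2)) /
          (1 - 1 / r) ^ 2 /
        ((1 + 1 / r) / (1 - 1 / r)) = -(2 * κ ^ 2 * t) / (r * (r ^ 2 - 1)) := by
    rw [div_div_div_eq]
    field_simp
    ring
  rw [key, hr2]
  have h3 : ρ ^ 2 + κ ^ 2 * t ^ 2 - 1 = κ ^ 2 * (1 + t ^ 2) := by rw [hκ2]; ring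
  rw [h3]
  field_simp

end aux

theorem artanh_integral (ρ κ : ℝ) (hρ : 1 < ρ) (hκ : κ = Real.sqrt (ρ ^ 2 - 1)) :
    ∫ t in Set.Ioi (0:ℝ),
        (1 / Real.sqrt (ρ ^ 2 + κ ^ 2 * t ^ 2) ^ 3) *
          _root_.artanh (1 / Real.sqrt (ρ ^ 2 + κ ^ 2 * t ^ 2)) =
      (π / 2) * (1 / (ρ * κ) - 1 / ρ ^ 2) := by
  have hρ0 : (0:ℝ) < ρ := lt_trans one_pos hρ
  have hρ2 : (0:ℝ) < ρ ^ 2 - 1 := by nlinarith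
  have hκ2 : κ ^ 2 = ρ ^ 2 - 1 := by rw [hκ]; exact Real.sq_sqrt hρ2.le
  have hκ0 : 0 < κ := by rw [hκ]; exact Real.sqrt_pos.2 hρ2
  set F : ℝ → ℝ := fun u =>
    _root_.artanh (1 / Real.sqrt (ρ ^ 2 + κ ^ 2 * u ^ 2)) * (u / (ρ ^ 2 * Real.sqrt (ρ ^ 2 + κ ^ 2 * u ^ 2)))
      - Real.arctan u / ρ ^ 2 + Real.arctan (κ * u / ρ) / (ρ * κ) with hF
  have hspos : ∀ u : ℝ, (0:ℝ) < ρ ^ 2 + κ ^ 2 * u ^ 2 := fun u => by nlinarith [sq_nonneg (κ * u)]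
  have hs1 : ∀ u : ℝ, (1:ℝ) < ρ ^ 2 + κ ^ 2 * u ^ 2 := fun u => by nlinarith [sq_nonneg (κ * u)]
  have hr1 : ∀ u : ℝ, 1 < Real.sqrt (ρ ^ 2 + κ ^ 2 * u ^ 2) := by
    intro u
    rw [show (1:ℝ) = Real.sqrt 1 by simp]
    exact Real.sqrt_lt_sqrt one_pos.le (hs1 u)
  have hr0 : ∀ u : ℝ, 0 < Real.sqrt (ρ ^ 2 + κ ^ 2 * u ^ 2) := fun u => lt_trans one_pos (hr1 u)
  -- derivative of F
  have hderiv : ∀ x ∈ Set.Ici (0:ℝ), HasDerivAt F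
      ((1 / Real.sqrt (ρ ^ 2 + κ ^ 2 * x ^ 2) ^ 3) *
        _root_.artanh (1 / Real.sqrt (ρ ^ 2 + κ ^ 2 * x ^ 2))) x := by
    intro t _
    have h1 := (deriv_artanh hρ hκ2 hκ0 t).mul (deriv_v hρ hκ2 hκ0 t)
    have h2 := (Real.hasDerivAt_arctan t).div_const (ρ ^ 2)
    have hin : HasDerivAt (fun u : ℝ => κ * u / ρ) (κ / ρ) t := by
      simpa using ((hasDerivAt_id t).const_mul κ).div_const ρ
    have h3 := ((Real.hasDerivAt_arctan (κ * t / ρ)).comp t hin).div_const (ρ * κ)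
    have h := (h1.sub h2).add h3
    refine h.congr_deriv ?_
    symm
    set r := Real.sqrt (ρ ^ 2 + κ ^ 2 * t ^ 2) with hrdef
    have hr2 : r ^ 2 = ρ ^ 2 + κ ^ 2 * t ^ 2 := Real.sq_sqrt (hspos t).le
    have hrpos := hr0 t
    have hrne : r ≠ 0 := hrpos.ne'
    clear_value r
    set A := _root_.artanh (1 / r) with hA
    have h1t : ((1:ℝ) + t ^ 2) ≠ 0 := by positivity
    have h2t : ((1:ℝ) + (κ * t / ρ) ^ 2) ≠ 0 := by positivity
    have hρne : ρ ≠ 0 := hρ0.ne'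
    have hκne : κ ≠ 0 := hκ0.ne'
    field_simp
    linear_combination (-(t^2*r)) * hr2 + (t^2*r^3) * hκ2
  -- nonnegativity
  have hpos : ∀ x ∈ Set.Ioi (0:ℝ), 0 ≤
      (1 / Real.sqrt (ρ ^ 2 + κ ^ 2 * x ^ 2) ^ 3) *
        _root_.artanh (1 / Real.sqrt (ρ ^ 2 + κ ^ 2 * x ^ 2)) := by
    intro x _
    have h1 := hr1 x
    have h0 := hr0 x
    have ha : 0 ≤ _root_.artanh (1 / Real.sqrt (ρ ^ 2 + κ ^ 2 * x ^ 2)) :=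
      _root_.artanh_nonneg (by positivity) ((div_lt_one h0).2 h1)
    positivity
  -- limit at infinity
  have htend : Tendsto F atTop
      (𝓝 (0 - (π / 2) / ρ ^ 2 + (π / 2) / (ρ * κ))) := by
    have hrtop : Tendsto (fun u : ℝ => Real.sqrt (ρ ^ 2 + κ ^ 2 * u ^ 2)) atTop atTop := by
      have hsq : Tendsto Real.sqrt atTop atTop := by
        apply tendsto_atTop_atTop_of_monotone (fun a b h => Real.sqrt_le_sqrt h)
        intro b
        exact ⟨b ^ 2, by rw [Real.sqrt_sq_eq_abs]; exact le_abs_self b⟩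
      apply hsq.comp
      apply tendsto_atTop_add_const_left
      exact (tendsto_pow_atTop two_ne_zero).const_mul_atTop (by positivity)
    have hginv : Tendsto (fun u : ℝ => 1 / Real.sqrt (ρ ^ 2 + κ ^ 2 * u ^ 2)) atTop (𝓝 0) := by
      simpa [one_div, Pi.inv_def] using hrtop.inv_tendsto_atTop
    have hAtend : Tendsto (fun u : ℝ => _root_.artanh (1 / Real.sqrt (ρ ^ 2 + κ ^ 2 * u ^ 2))) atTop
        (𝓝 0) := by
      have := continuousAt_artanh_zero.tendsto.comp hginv
      simpa [Function.comp_def, _root_.artanh_zero] using this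
    have hT1 : Tendsto (fun u : ℝ => _root_.artanh (1 / Real.sqrt (ρ ^ 2 + κ ^ 2 * u ^ 2)) *
        (u / (ρ ^ 2 * Real.sqrt (ρ ^ 2 + κ ^ 2 * u ^ 2)))) atTop (𝓝 0) := by
      apply squeeze_zero' (g := fun u : ℝ =>
        _root_.artanh (1 / Real.sqrt (ρ ^ 2 + κ ^ 2 * u ^ 2)) * (1 / (ρ ^ 2 * κ)))
      · filter_upwards [eventually_ge_atTop (0:ℝ)] with u hu
        have h1 := hr1 u
        have h0 := hr0 u
        have ha : 0 ≤ _root_.artanh (1 / Real.sqrt (ρ ^ 2 + κ ^ 2 * u ^ 2)) :=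
          _root_.artanh_nonneg (by positivity) ((div_lt_one h0).2 h1)
        positivity
      · filter_upwards [eventually_ge_atTop (0:ℝ)] with u hu
        have h1 := hr1 u
        have h0 := hr0 u
        have ha : 0 ≤ _root_.artanh (1 / Real.sqrt (ρ ^ 2 + κ ^ 2 * u ^ 2)) :=
          _root_.artanh_nonneg (by positivity) ((div_lt_one h0).2 h1)
        have hbound : u / (ρ ^ 2 * Real.sqrt (ρ ^ 2 + κ ^ 2 * u ^ 2)) ≤ 1 / (ρ ^ 2 * κ) := by
          have hκu : κ * u ≤ Real.sqrt (ρ ^ 2 + κ ^ 2 * u ^ 2) := by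
            rw [show κ * u = Real.sqrt ((κ * u) ^ 2) from
              (Real.sqrt_sq (by positivity)).symm]
            apply Real.sqrt_le_sqrt
            nlinarith
          rw [div_le_div_iff₀ (by positivity) (by positivity)]
          have h4 : ρ ^ 2 * (κ * u) ≤ ρ ^ 2 * Real.sqrt (ρ ^ 2 + κ ^ 2 * u ^ 2) :=
            mul_le_mul_of_nonneg_left hκu (by positivity)
          nlinarith [h4]
        exact mul_le_mul_of_nonneg_left hbound ha
      · have h5 := hAtend.mul_const (1 / (ρ ^ 2 * κ))
        rw [zero_mul] at h5
        exact h5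
    have hT2 : Tendsto (fun u : ℝ => Real.arctan u / ρ ^ 2) atTop (𝓝 ((π / 2) / ρ ^ 2)) :=
      (tendsto_nhds_of_tendsto_nhdsWithin Real.tendsto_arctan_atTop).div_const _
    have hT3 : Tendsto (fun u : ℝ => Real.arctan (κ * u / ρ) / (ρ * κ)) atTop
        (𝓝 ((π / 2) / (ρ * κ))) := by
      have hlin : Tendsto (fun u : ℝ => κ * u / ρ) atTop atTop := by
        apply Tendsto.atTop_div_const hρ0
        exact tendsto_id.const_mul_atTop hκ0
      exact (((tendsto_nhds_of_tendsto_nhdsWithin Real.tendsto_arctan_atTop).comp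
        hlin).div_const _)
    exact (hT1.sub hT2).add hT3
  rw [integral_Ioi_of_hasDerivAt_of_nonneg' hderiv hpos htend]
  have hF0 : F 0 = 0 := by
    simp [hF]
  rw [hF0]
  ring
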